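/- Suppose a six-party strategy outputs bits y_j and for each input x ∈ {0,1}^6 the joint outcome satisfies the cubic Boolean function win condition Σ_{j∈supp(s)} y_j = Σ_j x_{j−1}x_j x_{j+1} mod 2 with probability p_x, where the quantum strategy measures the stabilizer S_x of |C_6⟩ on state ρ. Then the average success probability Pr_Q[win] = (1/64) Σ_{x∈{0,1}^6} (1 + tr(ρ S_x))/2, and hence F(ρ,|C_6⟩) = 2·Pr_Q[win] − 1. -/

import Mathlib

/-! The cluster state is `|C₆⟩ = U |+⟩^{⊗6}` for the diagonal involution `U = ∏_j CZ_{j,j+1}`,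
whose entry at `t` is `(-1)^{Σ_j t_j t_{j+1}}`. Conjugating by `U` turns `X_j` into
`Z_{j-1} X_j Z_{j+1} = S_j`, so `S_x = U X^x U` with `X^x` the translation `t ↦ t + x` of the
computational basis. Summing the translations over all `x` gives the all-ones matrix
`64 |+⟩⟨+|`, hence `Σ_x S_x = 64 |C₆⟩⟨C₆|` and `Σ_x tr(ρ S_x) = 64 ⟨C₆|ρ|C₆⟩ = 64 F`; averaging
`(1 + tr(ρ S_x))/2` over the 64 inputs gives `Pr_Q[win] = (1 + F)/2`. -/

open Matrix
open scoped ComplexOrder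

/-- Pauli `X` acting on qubit `v`. -/
noncomputable def Xop {V : Type*} [Fintype V] [DecidableEq V] (v : V) :
    Matrix (V → ZMod 2) (V → ZMod 2) ℂ :=
  Matrix.of fun s t => if s = Function.update t v (t v + 1) then 1 else 0

/-- Pauli `Z` acting on qubit `v`. -/
noncomputable def Zop {V : Type*} [Fintype V] [DecidableEq V] (v : V) :
    Matrix (V → ZMod 2) (V → ZMod 2) ℂ :=
  Matrix.diagonal fun t => (-1 : ℂ) ^ (t v).val

/-- The six-qubit cyclic cluster state `|C₆⟩`: the product of the diagonal `CZ` gates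
over the edges `{j, j+1}` of the cycle `C₆` applied to `|+⟩^{⊗6}`. -/
noncomputable def C6vec : (ZMod 6 → ZMod 2) → ℂ :=
  fun t => (∏ j : ZMod 6, (-1 : ℂ) ^ ((t j).val * (t (j + 1)).val)) *
    ((Real.sqrt 2 : ℂ))⁻¹ ^ 6

/-- Stabilizer generators of `|C₆⟩`: `S_j = Z_{j-1} X_j Z_{j+1}`. -/
noncomputable def Sgen (j : ZMod 6) :
    Matrix (ZMod 6 → ZMod 2) (ZMod 6 → ZMod 2) ℂ :=
  Zop (j - 1) * Xop j * Zop (j + 1)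

/-- The stabilizer `S_x = ∏_{j=0}^{5} S_j^{x_j}`. -/
noncomputable def Sx (x : ZMod 6 → ZMod 2) :
    Matrix (ZMod 6 → ZMod 2) (ZMod 6 → ZMod 2) ℂ :=
  ((List.range 6).map fun j => Sgen (j : ZMod 6) ^ (x (j : ZMod 6)).val).prod

section ShiftMatrix

variable {R G : Type*} [Semiring R] [AddCommGroup G] [DecidableEq G]

variable (R) in
def shiftMatrix (a : G) : Matrix G G R :=
  of fun s t => if s = t + a then 1 else 0

theorem shiftMatrix_zero : shiftMatrix R (0 : G) = 1 := by
  ext s t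
  simp [shiftMatrix, one_apply]

theorem shiftMatrix_mul [Fintype G] (a b : G) :
    shiftMatrix R a * shiftMatrix R b = shiftMatrix R (a + b) := by
  ext s t
  simp [shiftMatrix, mul_apply, add_assoc, add_comm b a]

theorem shiftMatrix_pow [Fintype G] (a : G) (n : ℕ) :
    shiftMatrix R a ^ n = shiftMatrix R (n • a) := by
  induction n with
  | zero => simp [shiftMatrix_zero]
  | succ n ih => rw [pow_succ, ih, shiftMatrix_mul, succ_nsmul]

theorem list_prod_map_shiftMatrix [Fintype G] {ι : Type*} (l : List ι) (f : ι → G) :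
    (l.map fun i => shiftMatrix R (f i)).prod = shiftMatrix R (l.map f).sum := by
  induction l with
  | nil => simp [shiftMatrix_zero]
  | cons i l ih => simp [ih, shiftMatrix_mul]

theorem sum_shiftMatrix [Fintype G] : ∑ a : G, shiftMatrix R a = of fun _ _ => 1 := by
  ext s t
  simp [shiftMatrix, Matrix.sum_apply, ← sub_eq_iff_eq_add']

end ShiftMatrix

theorem Xop_eq_shiftMatrix {V : Type*} [Fintype V] [DecidableEq V] (v : V) :
    Xop v = shiftMatrix ℂ (Pi.single v 1) := by
  have : ∀ t : V → ZMod 2, Function.update t v (t v + 1) = t + Pi.single v 1 := by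
    intro t
    ext i
    by_cases h : i = v <;> simp [h]
  ext s t
  simp [Xop, shiftMatrix, this]

theorem neg_one_pow_val_add (a b : ZMod 2) :
    (-1 : ℂ) ^ (a + b).val = (-1) ^ a.val * (-1) ^ b.val := by
  rw [ZMod.val_add, ← pow_add, ← neg_one_pow_eq_pow_mod_two]

theorem neg_one_pow_val_mul_self (a : ZMod 2) : (-1 : ℂ) ^ a.val * (-1) ^ a.val = 1 := by
  rw [← neg_one_pow_val_add, CharTwo.add_self_eq_zero, ZMod.val_zero, pow_zero]

theorem prod_neg_one_pow_val {ι : Type*} (s : Finset ι) (f : ι → ZMod 2) :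
    ∏ i ∈ s, (-1 : ℂ) ^ (f i).val = (-1) ^ (∑ i ∈ s, f i).val := by
  classical
  induction s using Finset.induction_on with
  | empty => simp
  | insert i s hi ih => rw [Finset.prod_insert hi, Finset.sum_insert hi, ih, neg_one_pow_val_add]

section CyclePhase

variable {n : ℕ} [NeZero n]

def cyclePhase (t : ZMod n → ZMod 2) : ZMod 2 := ∑ j, t j * t (j + 1)

theorem cyclePhase_add_single (hn : 1 < n) (t : ZMod n → ZMod 2) (j : ZMod n) :
    cyclePhase (t + Pi.single j 1) = cyclePhase t + t (j - 1) + t (j + 1) := by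
  have : Fact (1 < n) := ⟨hn⟩
  set e : ZMod n → ZMod 2 := Pi.single j 1
  have hright : ∑ i, e i * t (i + 1) = t (j + 1) := by
    simp [e, Pi.single_apply]
  have hleft : ∑ i, t i * e (i + 1) = t (j - 1) := by
    rw [← (Equiv.subRight 1).sum_comp]
    simp [e, Pi.single_apply]
  have hboth : ∑ i, e i * e (i + 1) = 0 := by
    refine Finset.sum_eq_zero fun i _ => ?_
    by_cases h : i = j <;> simp [e, h]
  simp only [cyclePhase, Pi.add_apply, add_mul, mul_add, Finset.sum_add_distrib, hright, hleft,
    hboth]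
  ring

end CyclePhase

noncomputable def czCycle (n : ℕ) [NeZero n] : Matrix (ZMod n → ZMod 2) (ZMod n → ZMod 2) ℂ :=
  diagonal fun t => (-1) ^ (cyclePhase t).val

theorem czCycle_mul_self (n : ℕ) [NeZero n] : czCycle n * czCycle n = 1 := by
  simp [czCycle, diagonal_mul_diagonal, neg_one_pow_val_mul_self]

theorem C6vec_apply (t : ZMod 6 → ZMod 2) :
    C6vec t = (-1) ^ (cyclePhase t).val * (Real.sqrt 2 : ℂ)⁻¹ ^ 6 := by
  have hmul (a b : ZMod 2) : (-1 : ℂ) ^ (a.val * b.val) = (-1) ^ (a * b).val := by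
    rw [ZMod.val_mul, ← neg_one_pow_eq_pow_mod_two]
  simp only [C6vec, hmul, prod_neg_one_pow_val, cyclePhase]

theorem Sgen_eq_czCycle_conj (j : ZMod 6) : Sgen j = czCycle 6 * Xop j * czCycle 6 := by
  have hj : j - 1 ≠ j := by revert j; decide
  ext s t
  simp only [Sgen, Zop, czCycle, Xop_eq_shiftMatrix, diagonal_mul, mul_diagonal, shiftMatrix,
    of_apply]
  split_ifs with h
  · subst h
    rw [cyclePhase_add_single (by norm_num), neg_one_pow_val_add, neg_one_pow_val_add]
    simp only [Pi.add_apply, Pi.single_eq_of_ne hj, add_zero]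
    linear_combination -((-1 : ℂ) ^ (t (j - 1)).val * (-1) ^ (t (j + 1)).val) *
      neg_one_pow_val_mul_self (cyclePhase t)
  · simp

section Conjugation

variable {M : Type*} [Monoid M] {u : M}

theorem conj_pow_of_mul_self_eq_one (hu : u * u = 1) (a : M) (n : ℕ) :
    (u * a * u) ^ n = u * a ^ n * u := by
  induction n with
  | zero => simp [hu]
  | succ n ih =>
    rw [pow_succ, ih, pow_succ]
    simp only [mul_assoc]
    rw [← mul_assoc u u, hu, one_mul]

theorem list_prod_map_conj_of_mul_self_eq_one (hu : u * u = 1) {ι : Type*} (l : List ι)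
    (f : ι → M) : (l.map fun i => u * f i * u).prod = u * (l.map f).prod * u := by
  induction l with
  | nil => simp [hu]
  | cons i l ih =>
    rw [List.map_cons, List.prod_cons, ih, List.map_cons, List.prod_cons]
    simp only [mul_assoc]
    rw [← mul_assoc u u, hu, one_mul]

end Conjugation

theorem list_sum_range_six_single (x : ZMod 6 → ZMod 2) :
    ((List.range 6).map fun j => (x j).val • (Pi.single (j : ZMod 6) 1 : ZMod 6 → ZMod 2)).sum
      = x := by
  have hsingle (j : ZMod 6) :
      (x j).val • (Pi.single j 1 : ZMod 6 → ZMod 2) = Pi.single j (x j) := by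
    rw [← Pi.single_smul, nsmul_one, ZMod.natCast_zmod_val]
  conv_rhs => rw [← Finset.univ_sum_single x]
  simp only [hsingle]
  rw [show ∑ i : ZMod 6, Pi.single i (x i) = ∑ i : Fin 6, Pi.single i (x i) from rfl,
    Fin.sum_univ_six]
  simp [List.range_succ, add_assoc]
  rfl

theorem Sx_eq_czCycle_conj (x : ZMod 6 → ZMod 2) :
    Sx x = czCycle 6 * shiftMatrix ℂ x * czCycle 6 := by
  have hu := czCycle_mul_self 6
  simp only [Sx, Sgen_eq_czCycle_conj, conj_pow_of_mul_self_eq_one hu,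
    list_prod_map_conj_of_mul_self_eq_one hu, Xop_eq_shiftMatrix, shiftMatrix_pow,
    list_prod_map_shiftMatrix, list_sum_range_six_single]

theorem sum_Sx_eq_smul_vecMulVec : ∑ x, Sx x = (64 : ℂ) • vecMulVec C6vec (star C6vec) := by
  have hsqrt : (Real.sqrt 2 : ℂ) ^ 6 = 8 := by
    rw [show (Real.sqrt 2 : ℂ) ^ 6 = ((Real.sqrt 2 ^ 2 : ℝ) : ℂ) ^ 3 by push_cast; ring,
      Real.sq_sqrt zero_le_two]
    norm_num
  simp only [Sx_eq_czCycle_conj, ← Finset.sum_mul, ← Finset.mul_sum, sum_shiftMatrix]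
  ext v u
  simp [czCycle, C6vec_apply, vecMulVec, diagonal_mul, mul_diagonal, hsqrt]
  ring

theorem sum_trace_mul_Sx (ρ : Matrix (ZMod 6 → ZMod 2) (ZMod 6 → ZMod 2) ℂ) :
    ∑ x, (ρ * Sx x).trace = 64 * ∑ s, star (C6vec s) * (ρ *ᵥ C6vec) s := by
  rw [← trace_sum, ← Finset.mul_sum, sum_Sx_eq_smul_vecMulVec, mul_smul_comm, trace_smul,
    mul_vecMulVec, trace_vecMulVec, dotProduct_comm, smul_eq_mul]
  rfl

theorem cbf_win_probability_and_fidelity_general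
    (ρ : Matrix (ZMod 6 → ZMod 2) (ZMod 6 → ZMod 2) ℂ)
    (p : (ZMod 6 → ZMod 2) → ℝ)
    (hp : ∀ x, p x = (1 + ((ρ * Sx x).trace).re) / 2)
    (PrQ : ℝ) (hPrQ : PrQ = (1 / 64) * ∑ x : ZMod 6 → ZMod 2, p x)
    (F : ℝ) (hF : F = (∑ s, star (C6vec s) * (ρ.mulVec C6vec) s).re) :
    PrQ = (1 / 64) * ∑ x : ZMod 6 → ZMod 2, (1 + ((ρ * Sx x).trace).re) / 2 ∧
    F = 2 * PrQ - 1 := by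
  have hwin : PrQ = (1 / 64) * ∑ x : ZMod 6 → ZMod 2, (1 + ((ρ * Sx x).trace).re) / 2 := by
    simp only [hPrQ, hp]
  refine ⟨hwin, ?_⟩
  have hfid : ∑ x : ZMod 6 → ZMod 2, ((ρ * Sx x).trace).re = 64 * F := by
    rw [← Complex.re_sum, sum_trace_mul_Sx, hF]
    simp [Complex.mul_re]
  have hcard : Fintype.card (ZMod 6 → ZMod 2) = 64 := by simp
  rw [hwin, ← Finset.sum_div, Finset.sum_add_distrib, hfid, Finset.sum_const, Finset.card_univ,
    hcard]
  norm_num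
  ring

/-- Playing the cubic Boolean function game with the quantum strategy on state `ρ`:
the average success probability is `Pr_Q[win] = (1/64) Σ_x (1 + tr(ρ S_x))/2`, and
hence the fidelity satisfies `F(ρ, |C₆⟩) = 2 Pr_Q[win] - 1`. -/
theorem cbf_win_probability_and_fidelity
    (ρ : Matrix (ZMod 6 → ZMod 2) (ZMod 6 → ZMod 2) ℂ)
    (hρ : ρ.PosSemidef) (htr : ρ.trace = 1)
    (p : (ZMod 6 → ZMod 2) → ℝ)
    (hp : ∀ x, p x = (1 + ((ρ * Sx x).trace).re) / 2)
    (PrQ : ℝ) (hPrQ : PrQ = (1 / 64) * ∑ x : ZMod 6 → ZMod 2, p x)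
    (F : ℝ) (hF : F = (∑ s, star (C6vec s) * (ρ.mulVec C6vec) s).re) :
    PrQ = (1 / 64) * ∑ x : ZMod 6 → ZMod 2, (1 + ((ρ * Sx x).trace).re) / 2 ∧
    F = 2 * PrQ - 1 :=
  cbf_win_probability_and_fidelity_general ρ p hp PrQ hPrQ F hF
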